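/- arXiv:2510.06147 — 2 statements merged into one kernel-verified Lean document; each statement's English description precedes it below -/
import Mathlib

section
/- Let n ≥ 1, let ρ_i be a d_i-dimensional quantum state for each i ∈ Fin n, let ϱ be the product state on K = Π i, Fin (d i), and let X be a Hermitian matrix on K with Efron–Stein decomposition X = ∑_{J ⊆ Fin n} X^{=J}. Then Re(Tr[ϱ·X²]) = ∑_{J ⊆ Fin n} Re(Tr[ϱ·(X^{=J})²]). -/
/-!
The maps `E_i` commute, are idempotent because `Tr ρ_i = 1`, and are self-adjoint for the
bilinear form `⟨A, B⟩ = Tr[ϱ A B]`. Hence `E_i X^{=J} = X^{=J}` for `i ∉ J` and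
`E_i X^{=J} = 0` for `i ∈ J`, so two parts `X^{=J}`, `Y^{=J'}` with `J ≠ J'` are orthogonal:
pick `i` in one index set but not the other and move `E_i` across the form. Möbius inversion
on the Boolean lattice gives `X = ∑_J X^{=J}`, and expanding `Tr[ϱ X X]` leaves only the
diagonal terms.
-/

open scoped BigOperators ComplexOrder

noncomputable section

/-- A `d`-dimensional quantum state: positive semidefinite with trace 1. -/
def IsState {d : ℕ} (ρ : Matrix (Fin d) (Fin d) ℂ) : Prop :=
  ρ.PosSemidef ∧ ρ.trace = 1

/-- The product state `ρ₁ ⊗ ⋯ ⊗ ρ_n` on `K = Π i, Fin (dim i)`. -/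
def prodState {n : ℕ} {dim : Fin n → ℕ}
    (ρ : ∀ i, Matrix (Fin (dim i)) (Fin (dim i)) ℂ) :
    Matrix (∀ j, Fin (dim j)) (∀ j, Fin (dim j)) ℂ :=
  fun a b => ∏ i, ρ i (a i) (b i)

/-- Marginalization of the `i`-th component: `E_i X = Tr_i[ρ_i X] ⊗ Id_i`. -/
def Emap {n : ℕ} {dim : Fin n → ℕ}
    (ρ : ∀ i, Matrix (Fin (dim i)) (Fin (dim i)) ℂ) (i : Fin n)
    (X : Matrix (∀ j, Fin (dim j)) (∀ j, Fin (dim j)) ℂ) :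
    Matrix (∀ j, Fin (dim j)) (∀ j, Fin (dim j)) ℂ :=
  fun a b =>
    if a i = b i then
      ∑ e, ∑ c, ρ i e c * X (Function.update a i c) (Function.update b i e)
    else 0

/-- The product `∏_{i ∈ S} E_i` (the maps `E_i` commute, so applying them in
increasing order of the indices realizes this product). -/
def EProd {n : ℕ} {dim : Fin n → ℕ}
    (ρ : ∀ i, Matrix (Fin (dim i)) (Fin (dim i)) ℂ) (S : Finset (Fin n))
    (X : Matrix (∀ j, Fin (dim j)) (∀ j, Fin (dim j)) ℂ) :
    Matrix (∀ j, Fin (dim j)) (∀ j, Fin (dim j)) ℂ :=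
  (S.sort (· ≤ ·)).foldr (fun i Y => Emap ρ i Y) X

/-- The Efron–Stein part `X^{=J} = ∑_{I ⊆ J} (-1)^{|J| - |I|} (∏_{i ∉ I} E_i) X`. -/
def ESpart {n : ℕ} {dim : Fin n → ℕ}
    (ρ : ∀ i, Matrix (Fin (dim i)) (Fin (dim i)) ℂ)
    (X : Matrix (∀ j, Fin (dim j)) (∀ j, Fin (dim j)) ℂ)
    (J : Finset (Fin n)) :
    Matrix (∀ j, Fin (dim j)) (∀ j, Fin (dim j)) ℂ :=
  ∑ I ∈ J.powerset, ((-1 : ℂ) ^ (J.card - I.card)) • EProd ρ Iᶜ X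

namespace Finset

variable {ι R M : Type*} [DecidableEq ι] [Ring R]

theorem sum_Icc_neg_one_pow_card_sub {s t : Finset ι} (h : s ⊆ t) :
    ∑ u ∈ Icc s t, (-1 : R) ^ (#u - #s) = if s = t then 1 else 0 := by
  have hinj : Set.InjOn (s ∪ ·) ((t \ s).powerset : Set (Finset ι)) := fun u hu v hv huv => by
    simp only [coe_powerset, Set.mem_preimage, Set.mem_powerset_iff, coe_subset] at hu hv
    rw [← union_sdiff_cancel_left (disjoint_of_subset_right hu sdiff_disjoint.symm),
      ← union_sdiff_cancel_left (disjoint_of_subset_right hv sdiff_disjoint.symm)]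
    exact congrArg (· \ s) huv
  have hcard : ∀ u ∈ (t \ s).powerset,
      (-1 : R) ^ (#(s ∪ u) - #s) = ((-1 : ℤ) ^ #u : ℤ) := by
    intro u hu
    rw [card_union_of_disjoint (disjoint_of_subset_right (mem_powerset.1 hu) disjoint_sdiff)]
    simp
  have hempty : t \ s = ∅ ↔ s = t := by
    rw [sdiff_eq_empty_iff_subset, subset_antisymm_iff, and_iff_right h]
  rw [Icc_eq_image_powerset h, sum_image hinj, sum_congr rfl hcard, ← Int.cast_sum,
    sum_powerset_neg_one_pow_card]
  split_ifs <;> simp_all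

theorem sum_sum_powerset_neg_one_pow_smul [Fintype ι] [AddCommGroup M] [Module R M]
    (f : Finset ι → M) :
    ∑ t : Finset ι, ∑ s ∈ t.powerset, (-1 : R) ^ (#t - #s) • f s = f univ := by
  rw [sum_comm' (t' := univ) (s' := fun s => Icc s univ) (by simp)]
  simp_rw [← sum_smul, sum_Icc_neg_one_pow_card_sub (subset_univ _), ite_smul, one_smul,
    zero_smul, sum_ite_eq', mem_univ, if_true]

end Finset

section EfronStein

open Function Finset

variable {n : ℕ} {dim : Fin n → ℕ} (ρ : ∀ i, Matrix (Fin (dim i)) (Fin (dim i)) ℂ)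
  (X : Matrix (∀ j, Fin (dim j)) (∀ j, Fin (dim j)) ℂ) {i : Fin n} {a b : ∀ j, Fin (dim j)}

theorem Emap_apply_of_eq (h : a i = b i) :
    Emap ρ i X a b = ∑ e, ∑ c, ρ i e c * X (update a i c) (update b i e) :=
  if_pos h

theorem Emap_apply_of_ne (h : a i ≠ b i) : Emap ρ i X a b = 0 :=
  if_neg h

theorem Emap_apply_update (h : a i = b i) (c e : Fin (dim i)) :
    Emap ρ i X (update a i c) (update b i e) = if c = e then Emap ρ i X a b else 0 := by
  simp [Emap, h]

theorem isLinearMap_Emap (i : Fin n) : IsLinearMap ℂ (Emap ρ i) where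
  map_add A B := by
    ext a b
    by_cases h : a i = b i
    · simp [Emap_apply_of_eq _ _ h, mul_add, sum_add_distrib]
    · simp [Emap_apply_of_ne _ _ h]
  map_smul c A := by
    ext a b
    by_cases h : a i = b i
    · simp [Emap_apply_of_eq _ _ h, mul_sum, mul_left_comm]
    · simp [Emap_apply_of_ne _ _ h]

theorem Emap_sum (i : Fin n) {α : Type*} (s : Finset α)
    (f : α → Matrix (∀ j, Fin (dim j)) (∀ j, Fin (dim j)) ℂ) :
    Emap ρ i (∑ x ∈ s, f x) = ∑ x ∈ s, Emap ρ i (f x) :=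
  map_sum (isLinearMap_Emap ρ i).mk' f s

theorem Emap_comm (i j : Fin n) : Emap ρ i (Emap ρ j X) = Emap ρ j (Emap ρ i X) := by
  rcases eq_or_ne i j with rfl | hij
  · rfl
  ext a b
  by_cases hi : a i = b i
  · by_cases hj : a j = b j
    · have hij' : ∀ x y, update a i x j = update b i y j := fun _ _ => by
        simp [update_of_ne hij.symm, hj]
      have hji' : ∀ x y, update a j x i = update b j y i := fun _ _ => by
        simp [update_of_ne hij, hi]
      simp only [Emap_apply_of_eq _ _ hi, Emap_apply_of_eq _ _ hj, Emap_apply_of_eq _ _ (hij' _ _),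
        Emap_apply_of_eq _ _ (hji' _ _), mul_sum, update_comm hij,
        sum_comm (s := (univ : Finset (Fin (dim j)))) (t := (univ : Finset (Fin (dim i)))),
        mul_left_comm]
    · have hne : ∀ x y, update a i x j ≠ update b i y j := fun _ _ => by
        simp [update_of_ne hij.symm, hj]
      simp [Emap_apply_of_eq _ _ hi, Emap_apply_of_ne _ _ hj, Emap_apply_of_ne _ _ (hne _ _)]
  · have hne : ∀ x y, update a j x i ≠ update b j y i := fun _ _ => by
      simp [update_of_ne hij, hi]
    by_cases hj : a j = b j
    · simp [Emap_apply_of_ne _ _ hi, Emap_apply_of_eq _ _ hj, Emap_apply_of_ne _ _ (hne _ _)]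
    · simp [Emap_apply_of_ne _ _ hi, Emap_apply_of_ne _ _ hj]

theorem Emap_idem (htr : (ρ i).trace = 1) : Emap ρ i (Emap ρ i X) = Emap ρ i X := by
  ext a b
  by_cases h : a i = b i
  · have htr' : ∑ e, ρ i e e = 1 := htr
    simp only [Emap_apply_of_eq _ _ h, Emap_apply_update _ _ h, mul_ite, mul_zero, sum_ite_eq',
      mem_univ, if_true, ← sum_mul, htr', one_mul]
  · simp [Emap_apply_of_ne _ _ h]

theorem EProd_empty : EProd ρ ∅ X = X := by
  simp [EProd]

theorem EProd_insert {S : Finset (Fin n)} (hi : i ∉ S) :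
    EProd ρ (insert i S) X = Emap ρ i (EProd ρ S X) := by
  have hperm : ((insert i S).sort (· ≤ ·)).Perm (i :: S.sort (· ≤ ·)) :=
    ((insert i S).sort_perm_toList _).trans
      ((toList_insert hi).trans ((S.sort_perm_toList (· ≤ ·)).symm.cons i))
  have : LeftCommutative (fun i Y => Emap ρ i Y) := ⟨fun i j Y => Emap_comm ρ Y i j⟩
  exact hperm.foldr_eq X

theorem Emap_EProd_of_mem (htr : (ρ i).trace = 1) {S : Finset (Fin n)} (hi : i ∈ S) :
    Emap ρ i (EProd ρ S X) = EProd ρ S X := by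
  rw [← insert_erase hi, EProd_insert ρ X (notMem_erase i S), Emap_idem ρ _ htr]

theorem sum_ESpart : ∑ J, ESpart ρ X J = X := by
  simp only [ESpart]
  rw [sum_sum_powerset_neg_one_pow_smul, compl_univ, EProd_empty]

theorem Emap_ESpart_of_notMem (htr : (ρ i).trace = 1) {J : Finset (Fin n)} (hi : i ∉ J) :
    Emap ρ i (ESpart ρ X J) = ESpart ρ X J := by
  rw [ESpart, Emap_sum]
  refine sum_congr rfl fun I hI => ?_
  rw [(isLinearMap_Emap ρ i).map_smul, Emap_EProd_of_mem ρ X htr]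
  exact mem_compl.2 fun hiI => hi (mem_powerset.1 hI hiI)

theorem ESpart_insert {J : Finset (Fin n)} (hi : i ∉ J) :
    ESpart ρ X (insert i J) = ∑ I ∈ J.powerset, (-1 : ℂ) ^ (#J - #I) •
      (EProd ρ (insert i I)ᶜ X - Emap ρ i (EProd ρ (insert i I)ᶜ X)) := by
  rw [ESpart, sum_powerset_insert hi, ← sum_add_distrib]
  refine sum_congr rfl fun I hI => ?_
  have hiI : i ∉ I := fun h => hi (mem_powerset.1 hI h)
  have hIJ : #I ≤ #J := card_le_card (mem_powerset.1 hI)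
  have hcompl : insert i (insert i I)ᶜ = Iᶜ := by
    rw [compl_insert, insert_erase (mem_compl.2 hiI)]
  rw [← EProd_insert ρ X (by simp), hcompl, card_insert_of_notMem hi, card_insert_of_notMem hiI,
    Nat.succ_sub_succ, Nat.succ_sub hIJ, pow_succ, mul_neg_one, neg_smul, smul_sub]
  abel

theorem Emap_ESpart_of_mem (htr : (ρ i).trace = 1) {J : Finset (Fin n)} (hi : i ∈ J) :
    Emap ρ i (ESpart ρ X J) = 0 := by
  rw [← insert_erase hi, ESpart_insert ρ X (notMem_erase i J), Emap_sum]
  refine sum_eq_zero fun I _ => ?_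
  rw [(isLinearMap_Emap ρ i).map_smul, (isLinearMap_Emap ρ i).map_sub, Emap_idem ρ _ htr,
    sub_self, smul_zero]

theorem prodState_update_mul (a b : ∀ j, Fin (dim j)) (e f : Fin (dim i)) :
    prodState ρ (update a i e) (update b i f) * ρ i (a i) (b i) =
      prodState ρ a b * ρ i e f := by
  have hupd : ∀ j, ρ j (update a i e j) (update b i f j) =
      update (fun k => ρ k (a k) (b k)) i (ρ i e f) j :=
    apply_update₂ (fun j x y => ρ j x y) a b i e f
  simp only [prodState, hupd, prod_update_of_mem (mem_univ i),
    prod_eq_mul_prod_sdiff_singleton_of_mem (mem_univ i) fun j => ρ j (a j) (b j)]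
  ring

variable (A B : Matrix (∀ j, Fin (dim j)) (∀ j, Fin (dim j)) ℂ)

theorem trace_prodState_mul_mul_Emap_eq_sum :
    (prodState ρ * (A * Emap ρ i B)).trace
      = ∑ x ∈ univ.filter
          (fun x : (∀ j, Fin (dim j)) × (∀ j, Fin (dim j)) × (∀ j, Fin (dim j))
              × Fin (dim i) × Fin (dim i) => x.2.2.1 i = x.1 i),
          prodState ρ x.1 x.2.1 * A x.2.1 x.2.2.1 *
            (ρ i x.2.2.2.1 x.2.2.2.2 *
              B (update x.2.2.1 i x.2.2.2.2) (update x.1 i x.2.2.2.1)) := by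
  simp only [Matrix.trace, Matrix.diag, Matrix.mul_apply, sum_filter, Fintype.sum_prod_type,
    mul_sum]
  refine sum_congr rfl fun a _ => sum_congr rfl fun b _ => sum_congr rfl fun c _ => ?_
  by_cases h : c i = a i
  · simp [Emap_apply_of_eq _ _ h, h, mul_sum, mul_assoc]
  · simp [Emap_apply_of_ne _ _ h, h]

theorem trace_prodState_mul_Emap_mul_eq_sum :
    (prodState ρ * (Emap ρ i A * B)).trace
      = ∑ x ∈ univ.filter
          (fun x : (∀ j, Fin (dim j)) × (∀ j, Fin (dim j)) × (∀ j, Fin (dim j))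
              × Fin (dim i) × Fin (dim i) => x.2.1 i = x.2.2.1 i),
          prodState ρ x.1 x.2.1 *
            (ρ i x.2.2.2.1 x.2.2.2.2 *
              A (update x.2.1 i x.2.2.2.2) (update x.2.2.1 i x.2.2.2.1)) *
            B x.2.2.1 x.1 := by
  simp only [Matrix.trace, Matrix.diag, Matrix.mul_apply, sum_filter, Fintype.sum_prod_type,
    mul_sum]
  refine sum_congr rfl fun a _ => sum_congr rfl fun b _ => sum_congr rfl fun c _ => ?_
  by_cases h : b i = c i
  · simp [Emap_apply_of_eq _ _ h, h, mul_sum, sum_mul, mul_assoc]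
  · simp [Emap_apply_of_ne _ _ h, h]

theorem trace_prodState_mul_mul_Emap :
    (prodState ρ * (A * Emap ρ i B)).trace = (prodState ρ * (Emap ρ i A * B)).trace := by
  rw [trace_prodState_mul_mul_Emap_eq_sum, trace_prodState_mul_Emap_mul_eq_sum]
  -- Trade the `i`-th coordinates of `a, b` for `e, f`; the weights agree by `prodState_update_mul`.
  refine sum_nbij'
    (fun x => (update x.1 i x.2.2.2.1, update x.2.1 i x.2.2.2.2,
      update x.2.2.1 i x.2.2.2.2, x.1 i, x.2.1 i))
    (fun x => (update x.1 i x.2.2.2.1, update x.2.1 i x.2.2.2.2,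
      update x.2.2.1 i x.2.2.2.1, x.1 i, x.2.1 i)) ?_ ?_ ?_ ?_ ?_
  · rintro ⟨a, b, c, e, f⟩ -
    simp
  · rintro ⟨a, b, c, e, f⟩ -
    simp
  · rintro ⟨a, b, c, e, f⟩ hx
    simp only [mem_filter, mem_univ, true_and] at hx
    have hc : update c i (a i) = c := by rw [← hx, update_eq_self]
    simp [hc]
  · rintro ⟨a, b, c, e, f⟩ hx
    simp only [mem_filter, mem_univ, true_and] at hx
    have hc : update c i (b i) = c := by rw [hx, update_eq_self]
    simp [hc]
  · rintro ⟨a, b, c, e, f⟩ hx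
    simp only [mem_filter, mem_univ, true_and] at hx
    have hc : update c i (a i) = c := by rw [← hx, update_eq_self]
    simp only [update_idem, update_eq_self, hc]
    linear_combination
      (-(A b c * B (update c i f) (update a i e))) * prodState_update_mul ρ a b e f

theorem trace_prodState_mul_ESpart_mul_ESpart_of_ne (htr : ∀ i, (ρ i).trace = 1)
    {J J' : Finset (Fin n)} (h : J ≠ J') :
    (prodState ρ * (ESpart ρ A J * ESpart ρ B J')).trace = 0 := by
  obtain ⟨i, hJ, hJ'⟩ | ⟨i, hJ', hJ⟩ :
      (∃ i ∈ J, i ∉ J') ∨ ∃ i ∈ J', i ∉ J := by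
    by_contra! hcon
    exact h (Subset.antisymm (fun i => hcon.1 i) fun i => hcon.2 i)
  · rw [← Emap_ESpart_of_notMem ρ B (htr i) hJ', trace_prodState_mul_mul_Emap,
      Emap_ESpart_of_mem ρ A (htr i) hJ, Matrix.zero_mul, Matrix.mul_zero, Matrix.trace_zero]
  · rw [← Emap_ESpart_of_notMem ρ A (htr i) hJ, ← trace_prodState_mul_mul_Emap,
      Emap_ESpart_of_mem ρ B (htr i) hJ', Matrix.mul_zero, Matrix.mul_zero, Matrix.trace_zero]

theorem trace_prodState_mul_mul_eq_sum_ESpart (htr : ∀ i, (ρ i).trace = 1) :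
    (prodState ρ * (A * B)).trace =
      ∑ J, (prodState ρ * (ESpart ρ A J * ESpart ρ B J)).trace := by
  conv_lhs => rw [← sum_ESpart ρ A, ← sum_ESpart ρ B]
  simp only [sum_mul, mul_sum, Matrix.trace_sum]
  refine sum_congr rfl fun J _ => sum_eq_single J (fun J' _ hne => ?_) (by simp)
  exact trace_prodState_mul_ESpart_mul_ESpart_of_ne ρ A B htr hne

end EfronStein

theorem quantum_efron_stein_parseval_general (n : ℕ) (dim : Fin n → ℕ)
    (ρ : ∀ i, Matrix (Fin (dim i)) (Fin (dim i)) ℂ)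
    (hρ : ∀ i, IsState (ρ i))
    (X : Matrix (∀ j, Fin (dim j)) (∀ j, Fin (dim j)) ℂ) :
    ((prodState ρ * (X * X)).trace).re =
      ∑ J : Finset (Fin n),
        ((prodState ρ * (ESpart ρ X J * ESpart ρ X J)).trace).re := by
  rw [trace_prodState_mul_mul_eq_sum_ESpart ρ X X fun i => (hρ i).2, Complex.re_sum]

/-- Parseval for the quantum Efron–Stein decomposition. -/
theorem quantum_efron_stein_parseval (n : ℕ) (hn : 1 ≤ n) (dim : Fin n → ℕ)
    (ρ : ∀ i, Matrix (Fin (dim i)) (Fin (dim i)) ℂ)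
    (hρ : ∀ i, IsState (ρ i))
    (X : Matrix (∀ j, Fin (dim j)) (∀ j, Fin (dim j)) ℂ) (hX : X.IsHermitian) :
    ((prodState ρ * (X * X)).trace).re =
      ∑ J : Finset (Fin n),
        ((prodState ρ * (ESpart ρ X J * ESpart ρ X J)).trace).re :=
  quantum_efron_stein_parseval_general n dim ρ hρ X
end
end

section
/- Let q be a probability vector on Fin d with q i ≥ γ > 0 for all i and σ = diag(q). Let ρ_1, …, ρ_T be d-dimensional quantum states with tensor product ϱ and average ρ_avg, and set μ := D²_{Bχ}(ρ_avg‖σ). Define M := (1/T²)·∑_{s ≠ t} C_{st} − ((T−1)/T)·Id on (Fin T → Fin d). Then |Re(Tr[ϱ·M]) − μ| ≤ √(d/(γ·T))·√μ + (d−1)/T. -/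
open scoped BigOperators ComplexOrder

noncomputable section

/-- Tensor product of `T` states on `ℂ^d`, indexed by `Fin T → Fin d`. -/
def tensorState {d T : ℕ} (ρ : Fin T → Matrix (Fin d) (Fin d) ℂ) :
    Matrix (Fin T → Fin d) (Fin T → Fin d) ℂ :=
  fun a b => ∏ t, ρ t (a t) (b t)

/-- Average of `T` states. -/
def avgState {d T : ℕ} (ρ : Fin T → Matrix (Fin d) (Fin d) ℂ) :
    Matrix (Fin d) (Fin d) ℂ :=
  ((T : ℂ))⁻¹ • ∑ t, ρ t

/-- Bures χ²-divergence of `ρ` from `σ = diag q`. -/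
def DBchi {d : ℕ} (q : Fin d → ℝ) (ρ : Matrix (Fin d) (Fin d) ℂ) : ℝ :=
  (∑ i, ∑ j, (2 / (q i + q j)) * ‖ρ i j‖ ^ 2) - 1

/-- The observable `C` applied to the `s`-th and `t`-th tensor factors. -/
def Cst {d T : ℕ} (q : Fin d → ℝ) (s t : Fin T) :
    Matrix (Fin T → Fin d) (Fin T → Fin d) ℂ :=
  fun a b =>
    if b s = a t ∧ b t = a s ∧ ∀ r, r ≠ s → r ≠ t → a r = b r
    then ((2 / (q (a s) + q (a t)) : ℝ) : ℂ) else 0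

/-!
For `s ≠ t`, `Tr[ϱ C_st] = B(ρ_t, ρ_s)` for the bilinear form
`B(X, Y) = ∑ᵢⱼ 2/(qᵢ + qⱼ) Xᵢⱼ Yⱼᵢ`, and `B(X, X) = D²_{Bχ}(X‖σ) + 1` for Hermitian `X`.
Expanding `B(∑ₜ ρₜ, ∑ₜ ρₜ) = T² (μ + 1)` shows that the bias is exactly
`Re Tr[ϱ M] - μ = -(∑ₜ D²_{Bχ}(ρₜ‖σ)) / T²`.
Each `D²_{Bχ}(ρₜ‖σ)` is nonnegative, since it dominates the χ²-divergence of the diagonal of `ρₜ`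
from `q`, and at most `∑ᵢ (ρₜ)ᵢᵢ / qᵢ - 1`, by `|ρᵢⱼ|² ≤ ρᵢᵢ ρⱼⱼ` and the harmonic–arithmetic mean
inequality. Averaged over `t` this becomes `∑ᵢ ((ρ_avg)ᵢᵢ - qᵢ) / qᵢ + (d - 1)`, and Cauchy–Schwarz
bounds the sum by `√(d/γ) · √χ²(diag ρ_avg ‖ q) ≤ √(d/γ) · √μ`.
-/

namespace Matrix.PosSemidef

variable {n : Type*} {A : Matrix n n ℂ}

theorem re_apply_self_nonneg (hA : A.PosSemidef) (i : n) : 0 ≤ (A i i).re :=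
  (Complex.nonneg_iff.mp hA.diag_nonneg).1

theorem ofReal_re_apply_self (hA : A.PosSemidef) (i : n) : ((A i i).re : ℂ) = A i i :=
  Complex.ext rfl (Complex.nonneg_iff.mp hA.diag_nonneg).2

theorem norm_apply_sq_le [Fintype n] (hA : A.PosSemidef) (i j : n) :
    ‖A i j‖ ^ 2 ≤ (A i i).re * (A j j).re := by
  classical
  have hdet := (hA.submatrix ![i, j]).det_nonneg
  rw [Matrix.det_fin_two] at hdet
  simp only [submatrix_apply, Matrix.cons_val_zero, Matrix.cons_val_one,
    ← hA.isHermitian.apply j i, Complex.star_def,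
    Complex.mul_conj] at hdet
  rw [← hA.ofReal_re_apply_self i, ← hA.ofReal_re_apply_self j] at hdet
  rw [← Complex.ofReal_mul, ← Complex.ofReal_sub, Complex.zero_le_real] at hdet
  rw [← Complex.normSq_eq_norm_sq]
  linarith

end Matrix.PosSemidef

theorem Finset.sum_div_le_sqrt_mul_sqrt {ι : Type*} (s : Finset ι) (x : ι → ℝ) {q : ι → ℝ}
    (hq : ∀ i ∈ s, 0 < q i) :
    ∑ i ∈ s, x i / q i ≤ √(∑ i ∈ s, 1 / q i) * √(∑ i ∈ s, x i ^ 2 / q i) := by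
  rw [← Real.sqrt_mul (Finset.sum_nonneg fun i hi => (one_div_pos.mpr (hq i hi)).le)]
  refine Real.le_sqrt_of_sq_le (Finset.sum_sq_le_sum_mul_sum_of_sq_le_mul s
    (fun i hi => (one_div_pos.mpr (hq i hi)).le)
    (fun i hi => div_nonneg (sq_nonneg _) (hq i hi).le) fun i hi => le_of_eq ?_)
  field_simp

theorem Matrix.sum_re_apply_self_eq_one {n : Type*} [Fintype n] {A : Matrix n n ℂ}
    (hA : A.trace = 1) : ∑ i, (A i i).re = 1 := by
  simpa [Matrix.trace, Complex.re_sum] using congrArg Complex.re hA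

theorem Real.sqrt_div_le_sqrt_div_of_one_le {x t : ℝ} (hx : 0 ≤ x) (ht : 1 ≤ t) :
    √x / t ≤ √(x / t) := by
  rw [Real.sqrt_div hx]
  exact div_le_div_of_nonneg_left (Real.sqrt_nonneg x) (Real.sqrt_pos.mpr (by linarith))
    (Real.sqrt_le_self_iff.mpr (Or.inr ht))

section DBchi

variable {d : ℕ} {q : Fin d → ℝ} {ρ : Matrix (Fin d) (Fin d) ℂ}

theorem sum_sq_sub_div_le_DBchi (hq : ∀ i, 0 < q i) (hq1 : ∑ i, q i = 1) (hρ : ρ.trace = 1) :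
    ∑ i, ((ρ i i).re - q i) ^ 2 / q i ≤ DBchi q ρ := by
  have hdiag : ∀ i, (ρ i i).re ^ 2 / q i ≤ ∑ j, 2 / (q i + q j) * ‖ρ i j‖ ^ 2 := fun i =>
    calc (ρ i i).re ^ 2 / q i ≤ ‖ρ i i‖ ^ 2 / q i := by
          have hre : (ρ i i).re ^ 2 ≤ ‖ρ i i‖ ^ 2 := by
            rw [← sq_abs]; gcongr; exact Complex.abs_re_le_norm _
          gcongr; exact (hq i).le
      _ = 2 / (q i + q i) * ‖ρ i i‖ ^ 2 := by field_simp; ring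
      _ ≤ ∑ j, 2 / (q i + q j) * ‖ρ i j‖ ^ 2 :=
          Finset.single_le_sum (f := fun j => 2 / (q i + q j) * ‖ρ i j‖ ^ 2)
            (fun j _ => by have := hq i; have := hq j; positivity) (Finset.mem_univ i)
  have hexpand : ∑ i, ((ρ i i).re - q i) ^ 2 / q i = ∑ i, (ρ i i).re ^ 2 / q i - 1 := by
    have h : ∀ i, ((ρ i i).re - q i) ^ 2 / q i = (ρ i i).re ^ 2 / q i - 2 * (ρ i i).re + q i :=
      fun i => by field_simp [(hq i).ne']; ring
    simp only [h, Finset.sum_add_distrib, Finset.sum_sub_distrib, ← Finset.mul_sum,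
      Matrix.sum_re_apply_self_eq_one hρ, hq1]
    ring
  rw [hexpand, DBchi]
  linarith [Finset.sum_le_sum fun i (_ : i ∈ Finset.univ) => hdiag i]

theorem DBchi_nonneg (hq : ∀ i, 0 < q i) (hq1 : ∑ i, q i = 1) (hρ : ρ.trace = 1) :
    0 ≤ DBchi q ρ :=
  (Finset.sum_nonneg fun i _ => div_nonneg (sq_nonneg _) (hq i).le).trans
    (sum_sq_sub_div_le_DBchi hq hq1 hρ)

theorem DBchi_le_sum_div (hq : ∀ i, 0 < q i) (hρ : ρ.PosSemidef) (htr : ρ.trace = 1) :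
    DBchi q ρ ≤ ∑ i, (ρ i i).re / q i - 1 := by
  set p : Fin d → ℝ := fun i => (ρ i i).re
  -- harmonic mean ≤ arithmetic mean: `2 / (a + b) ≤ (1 / a + 1 / b) / 2`
  have hentry : ∀ i j,
      2 / (q i + q j) * ‖ρ i j‖ ^ 2 ≤ (p i / q i * p j + p i * (p j / q j)) / 2 := by
    intro i j
    have hi := hq i; have hj := hq j
    calc 2 / (q i + q j) * ‖ρ i j‖ ^ 2 ≤ 2 / (q i + q j) * (p i * p j) := by
          gcongr; exact hρ.norm_apply_sq_le i j
      _ ≤ (1 / q i + 1 / q j) / 2 * (p i * p j) := by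
          refine mul_le_mul_of_nonneg_right ?_
            (mul_nonneg (hρ.re_apply_self_nonneg i) (hρ.re_apply_self_nonneg j))
          rw [div_add_div _ _ hi.ne' hj.ne', div_div,
            div_le_div_iff₀ (by positivity) (by positivity)]
          nlinarith [sq_nonneg (q i - q j)]
      _ = _ := by ring
  have hp : ∑ i, p i = 1 := Matrix.sum_re_apply_self_eq_one htr
  have hsum := Finset.sum_le_sum fun i (_ : i ∈ Finset.univ) =>
    Finset.sum_le_sum fun j (_ : j ∈ Finset.univ) => hentry i j
  simp only [← Finset.sum_div, Finset.sum_add_distrib, ← Finset.mul_sum, ← Finset.sum_mul, hp]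
    at hsum
  rw [DBchi]
  linarith

end DBchi

section Tensor

variable {d T : ℕ}

theorem Cst_apply_eq_ite (q : Fin d → ℝ) (s t : Fin T) (a b : Fin T → Fin d) :
    Cst q s t a b = if b = a ∘ Equiv.swap s t then ((2 / (q (a s) + q (a t)) : ℝ) : ℂ) else 0 := by
  refine if_congr ⟨fun ⟨hs, ht, hr⟩ => funext fun r => ?_, ?_⟩ rfl rfl
  · rcases eq_or_ne r s with rfl | hrs
    · simpa using hs
    rcases eq_or_ne r t with rfl | hrt
    · simpa using ht
    simpa [Equiv.swap_apply_of_ne_of_ne hrs hrt] using (hr r hrs hrt).symm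
  · rintro rfl
    exact ⟨by simp, by simp, fun r hrs hrt => by simp [Equiv.swap_apply_of_ne_of_ne hrs hrt]⟩

theorem trace_mul_Cst (q : Fin d → ℝ) (s t : Fin T) (X : Matrix (Fin T → Fin d) (Fin T → Fin d) ℂ) :
    (X * Cst q s t).trace
      = ∑ a, ((2 / (q (a s) + q (a t)) : ℝ) : ℂ) * X (a ∘ Equiv.swap s t) a := by
  rw [Matrix.trace_mul_comm]
  simp only [Matrix.trace, Matrix.diag, Matrix.mul_apply, Cst_apply_eq_ite, ite_mul, zero_mul,
    Finset.sum_ite_eq', Finset.mem_univ, if_true]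

theorem sum_mul_tensorState_comp_swap (ρ : Fin T → Matrix (Fin d) (Fin d) ℂ) {s t : Fin T}
    (hst : s ≠ t) (F : Fin d → Fin d → ℂ) :
    ∑ a, F (a s) (a t) * tensorState ρ (a ∘ Equiv.swap s t) a
      = (∑ i, ∑ j, F i j * (ρ s j i * ρ t i j)) * ∏ r ∈ {s, t}ᶜ, (ρ r).trace := by
  -- `∏ r, g i j r (a r)` vanishes unless `a s = i` and `a t = j`, when it is the summand for `a`;
  -- this turns the sum over `a` into a product of sums.
  let g : Fin d → Fin d → Fin T → Fin d → ℂ := fun i j r k =>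
    if r = s then (if k = i then ρ s j i else 0)
    else if r = t then (if k = j then ρ t i j else 0) else ρ r k k
  have hpoint : ∀ a : Fin T → Fin d, F (a s) (a t) * tensorState ρ (a ∘ Equiv.swap s t) a
      = ∑ i, ∑ j, F i j * ∏ r, g i j r (a r) := by
    intro a
    rw [Finset.sum_eq_single (a s), Finset.sum_eq_single (a t)]
    · congr 1
      refine Finset.prod_congr rfl fun r _ => ?_
      rcases eq_or_ne r s with rfl | hrs
      · simp [g]
      rcases eq_or_ne r t with rfl | hrt
      · simp [g, hrs]
      · simp [g, hrs, hrt, Equiv.swap_apply_of_ne_of_ne hrs hrt]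
    · intro j _ hj
      rw [Finset.prod_eq_zero (Finset.mem_univ t) (by simp [g, hst.symm, Ne.symm hj]), mul_zero]
    · simp
    · intro i _ hi
      refine Finset.sum_eq_zero fun j _ => ?_
      rw [Finset.prod_eq_zero (Finset.mem_univ s) (by simp [g, Ne.symm hi]), mul_zero]
    · simp
  have hfactor : ∀ i j, ∏ r, ∑ k, g i j r k
      = ρ s j i * ρ t i j * ∏ r ∈ {s, t}ᶜ, (ρ r).trace := by
    intro i j
    rw [← Finset.prod_mul_prod_compl {s, t}, Finset.prod_pair hst]
    congr 1
    · simp [g, hst.symm]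
    · refine Finset.prod_congr rfl fun r hr => ?_
      simp only [Finset.mem_compl, Finset.mem_insert, Finset.mem_singleton, not_or] at hr
      simp [g, hr.1, hr.2, Matrix.trace]
  simp only [hpoint]
  rw [Finset.sum_comm]
  simp only [Finset.sum_mul]
  refine Finset.sum_congr rfl fun i _ => ?_
  rw [Finset.sum_comm]
  refine Finset.sum_congr rfl fun j _ => ?_
  rw [← Finset.mul_sum, ← Fintype.prod_sum, hfactor]
  ring

end Tensor

section Observable

variable {d T : ℕ}

def buresForm (q : Fin d → ℝ) :
    Matrix (Fin d) (Fin d) ℂ →ₗ[ℂ] Matrix (Fin d) (Fin d) ℂ →ₗ[ℂ] ℂ :=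
  LinearMap.mk₂ ℂ (fun X Y => ∑ i, ∑ j, ((2 / (q i + q j) : ℝ) : ℂ) * (X i j * Y j i))
    (fun _ _ _ => by simp only [Matrix.add_apply, add_mul, mul_add, Finset.sum_add_distrib])
    (fun _ _ _ => by
      simp only [Matrix.smul_apply, smul_eq_mul, Finset.mul_sum]
      exact Finset.sum_congr rfl fun _ _ => Finset.sum_congr rfl fun _ _ => by ring)
    (fun _ _ _ => by simp only [Matrix.add_apply, mul_add, Finset.sum_add_distrib])
    (fun _ _ _ => by
      simp only [Matrix.smul_apply, smul_eq_mul, Finset.mul_sum]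
      exact Finset.sum_congr rfl fun _ _ => Finset.sum_congr rfl fun _ _ => by ring)

theorem buresForm_apply (q : Fin d → ℝ) (X Y : Matrix (Fin d) (Fin d) ℂ) :
    buresForm q X Y = ∑ i, ∑ j, ((2 / (q i + q j) : ℝ) : ℂ) * (X i j * Y j i) := rfl

theorem buresForm_self {q : Fin d → ℝ} {X : Matrix (Fin d) (Fin d) ℂ} (hX : X.IsHermitian) :
    buresForm q X X = ((DBchi q X + 1 : ℝ) : ℂ) := by
  rw [buresForm_apply, DBchi]
  push_cast
  rw [sub_add_cancel]
  refine Finset.sum_congr rfl fun i _ => Finset.sum_congr rfl fun j _ => ?_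
  rw [← hX.apply j i, Complex.star_def, Complex.mul_conj, Complex.normSq_eq_norm_sq]
  push_cast
  ring

theorem trace_tensorState (ρ : Fin T → Matrix (Fin d) (Fin d) ℂ) :
    (tensorState ρ).trace = ∏ t, (ρ t).trace := by
  simp only [Matrix.trace, Matrix.diag, tensorState, Fintype.prod_sum]

theorem trace_tensorState_mul_Cst {q : Fin d → ℝ} {ρ : Fin T → Matrix (Fin d) (Fin d) ℂ}
    (hρ : ∀ t, (ρ t).trace = 1) {s t : Fin T} (hst : s ≠ t) :
    (tensorState ρ * Cst q s t).trace = buresForm q (ρ t) (ρ s) := by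
  rw [trace_mul_Cst, sum_mul_tensorState_comp_swap ρ hst (fun i j => ((2 / (q i + q j) : ℝ) : ℂ)),
    buresForm_apply]
  simp [hρ, mul_comm (ρ s _ _)]

theorem isState_avgState {ρ : Fin T → Matrix (Fin d) (Fin d) ℂ} (hT : T ≠ 0)
    (hρ : ∀ t, IsState (ρ t)) : IsState (avgState ρ) := by
  refine ⟨(Matrix.posSemidef_sum _ fun t _ => (hρ t).1).smul ?_, ?_⟩
  · show (0 : ℂ) ≤ (T : ℂ)⁻¹
    rw [← Complex.ofReal_natCast, ← Complex.ofReal_inv, Complex.zero_le_real]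
    positivity
  · rw [avgState, Matrix.trace_smul, Matrix.trace_sum]
    simp [fun t => (hρ t).2, hT]

theorem sum_sum_trace_tensorState_mul_Cst {q : Fin d → ℝ} {ρ : Fin T → Matrix (Fin d) (Fin d) ℂ}
    (hρ : ∀ t, (ρ t).trace = 1) :
    ∑ s, ∑ t ∈ Finset.univ \ {s}, (tensorState ρ * Cst q s t).trace
      = buresForm q (∑ t, ρ t) (∑ s, ρ s) - ∑ s, buresForm q (ρ s) (ρ s) := by
  have hrow : ∀ s, ∑ t ∈ Finset.univ \ {s}, (tensorState ρ * Cst q s t).trace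
      = ∑ t, buresForm q (ρ t) (ρ s) - buresForm q (ρ s) (ρ s) := fun s => by
    rw [Finset.sdiff_singleton_eq_erase, ← Finset.sum_erase_eq_sub (Finset.mem_univ s)]
    exact Finset.sum_congr rfl fun t ht =>
      trace_tensorState_mul_Cst hρ (Finset.ne_of_mem_erase ht).symm
  simp only [hrow, Finset.sum_sub_distrib, map_sum, LinearMap.sum_apply]

theorem trace_tensorState_mul_observable {q : Fin d → ℝ} {ρ : Fin T → Matrix (Fin d) (Fin d) ℂ}
    (hT : T ≠ 0) (hρ : ∀ t, IsState (ρ t)) :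
    (tensorState ρ * ((((T : ℂ) ^ 2)⁻¹ • ∑ s, ∑ t ∈ Finset.univ \ {s}, Cst q s t) -
        (((T : ℂ) - 1) / (T : ℂ)) • (1 : Matrix (Fin T → Fin d) (Fin T → Fin d) ℂ))).trace
      = ((DBchi q (avgState ρ) - (∑ t, DBchi q (ρ t)) / T ^ 2 : ℝ) : ℂ) := by
  have htr : ∀ t, (ρ t).trace = 1 := fun t => (hρ t).2
  have hsum : ∑ t, ρ t = (T : ℂ) • avgState ρ := by
    rw [avgState, smul_smul, mul_inv_cancel₀ (Nat.cast_ne_zero.mpr hT), one_smul]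
  have havg : buresForm q (∑ t, ρ t) (∑ s, ρ s)
      = (T : ℂ) ^ 2 * ((DBchi q (avgState ρ) + 1 : ℝ) : ℂ) := by
    simp only [hsum, map_smul, LinearMap.smul_apply, smul_eq_mul,
      buresForm_self (isState_avgState hT hρ).1.isHermitian]
    ring
  rw [Matrix.mul_sub, Matrix.trace_sub, Matrix.mul_smul, Matrix.trace_smul, Matrix.mul_smul,
    Matrix.trace_smul, Matrix.mul_one, Matrix.mul_sum, Matrix.trace_sum]
  simp only [Matrix.mul_sum, Matrix.trace_sum]
  rw [sum_sum_trace_tensorState_mul_Cst htr, havg, trace_tensorState]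
  simp only [fun t => buresForm_self (q := q) (hρ t).1.isHermitian, htr, Finset.prod_const_one]
  have hT' : (T : ℂ) ≠ 0 := Nat.cast_ne_zero.mpr hT
  push_cast
  simp only [Finset.sum_add_distrib, Finset.sum_const, Finset.card_univ, Fintype.card_fin,
    smul_eq_mul, nsmul_eq_mul, mul_one]
  field_simp
  ring

end Observable

section Bias
variable {d T : ℕ} {q : Fin d → ℝ}

theorem sum_re_div_sub_one_le_sqrt_DBchi {γ : ℝ} (hγ : 0 < γ) (hq : ∀ i, γ ≤ q i)
    (hq1 : ∑ i, q i = 1) {ρ : Matrix (Fin d) (Fin d) ℂ} (hρ : ρ.trace = 1) :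
    ∑ i, (ρ i i).re / q i - 1 ≤ √(d / γ) * √(DBchi q ρ) + (d - 1) := by
  have hq0 : ∀ i, 0 < q i := fun i => hγ.trans_le (hq i)
  have hsplit : ∑ i, (ρ i i).re / q i = ∑ i, ((ρ i i).re - q i) / q i + d := by
    simp [sub_div, div_self (hq0 _).ne']
  have hinv : ∑ i, 1 / q i ≤ d / γ := by
    calc ∑ i, 1 / q i ≤ ∑ _i : Fin d, 1 / γ :=
          Finset.sum_le_sum fun i _ => one_div_le_one_div_of_le hγ (hq i)
      _ = d / γ := by simp [div_eq_mul_inv]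
  have hcs := Finset.sum_div_le_sqrt_mul_sqrt Finset.univ (fun i => (ρ i i).re - q i)
    fun i _ => hq0 i
  have hsqrt := mul_le_mul (Real.sqrt_le_sqrt hinv)
    (Real.sqrt_le_sqrt (sum_sq_sub_div_le_DBchi hq0 hq1 hρ)) (Real.sqrt_nonneg _) (Real.sqrt_nonneg _)
  linarith

theorem sum_sum_re_div_eq (hT : T ≠ 0) (ρ : Fin T → Matrix (Fin d) (Fin d) ℂ) :
    ∑ t, ∑ i, (ρ t i i).re / q i = T * ∑ i, (avgState ρ i i).re / q i := by
  have hre : ∀ i, (avgState ρ i i).re = (∑ t, (ρ t i i).re) / T := fun i => by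
    rw [avgState, Matrix.smul_apply, Matrix.sum_apply, smul_eq_mul,
      ← Complex.ofReal_natCast, ← Complex.ofReal_inv, Complex.re_ofReal_mul, Complex.re_sum,
      inv_mul_eq_div]
  simp only [hre, Finset.mul_sum, Finset.sum_div]
  rw [Finset.sum_comm]
  refine Finset.sum_congr rfl fun i _ => Finset.sum_congr rfl fun t _ => ?_
  field_simp

theorem sum_DBchi_le {γ : ℝ} (hγ : 0 < γ) (hq : ∀ i, γ ≤ q i) (hq1 : ∑ i, q i = 1)
    (hT : T ≠ 0) {ρ : Fin T → Matrix (Fin d) (Fin d) ℂ} (hρ : ∀ t, IsState (ρ t)) :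
    ∑ t, DBchi q (ρ t) ≤ T * (√(d / γ) * √(DBchi q (avgState ρ)) + (d - 1)) := by
  have hq0 : ∀ i, 0 < q i := fun i => hγ.trans_le (hq i)
  calc ∑ t, DBchi q (ρ t) ≤ ∑ t, (∑ i, (ρ t i i).re / q i - 1) :=
        Finset.sum_le_sum fun t _ => DBchi_le_sum_div hq0 (hρ t).1 (hρ t).2
    _ = T * (∑ i, (avgState ρ i i).re / q i - 1) := by
        rw [Finset.sum_sub_distrib, sum_sum_re_div_eq hT]
        simp [mul_sub]
    _ ≤ T * (√(d / γ) * √(DBchi q (avgState ρ)) + (d - 1)) := by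
        gcongr
        exact sum_re_div_sub_one_le_sqrt_DBchi hγ hq hq1 (isState_avgState hT hρ).2

end Bias

/-- Bias bound for the state-certification observable
`M = (1/T²) ∑_{s ≠ t} C_{st} - ((T-1)/T) Id`. -/
theorem certification_observable_bias (d T : ℕ) (hT : 1 ≤ T) (γ : ℝ) (hγ : 0 < γ)
    (q : Fin d → ℝ) (hq : ∀ i, γ ≤ q i) (hq1 : (∑ i, q i) = 1)
    (ρ : Fin T → Matrix (Fin d) (Fin d) ℂ) (hρ : ∀ t, IsState (ρ t))
    (μ : ℝ) (hμ : μ = DBchi q (avgState ρ))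
    (M : Matrix (Fin T → Fin d) (Fin T → Fin d) ℂ)
    (hM : M = (((T : ℂ) ^ 2)⁻¹ • ∑ s, ∑ t ∈ Finset.univ \ {s}, Cst q s t) -
        (((T : ℂ) - 1) / (T : ℂ)) • (1 : Matrix (Fin T → Fin d) (Fin T → Fin d) ℂ)) :
    |((tensorState ρ * M).trace).re - μ| ≤
      Real.sqrt ((d : ℝ) / (γ * (T : ℝ))) * Real.sqrt μ + ((d : ℝ) - 1) / (T : ℝ) := by
  have hT0 : T ≠ 0 := Nat.one_le_iff_ne_zero.mp hT
  have hT1 : (1 : ℝ) ≤ T := by exact_mod_cast hT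
  have hq0 : ∀ i, 0 < q i := fun i => hγ.trans_le (hq i)
  have hD : 0 ≤ ∑ t, DBchi q (ρ t) :=
    Finset.sum_nonneg fun t _ => DBchi_nonneg hq0 hq1 (hρ t).2
  have hbound := sum_DBchi_le hγ hq hq1 hT0 hρ
  rw [← hμ] at hbound
  have hbias : (tensorState ρ * M).trace = ((μ - (∑ t, DBchi q (ρ t)) / T ^ 2 : ℝ) : ℂ) := by
    rw [hM, hμ]
    exact trace_tensorState_mul_observable hT0 hρ
  rw [hbias, Complex.ofReal_re, sub_sub_cancel_left, abs_neg,
    abs_of_nonneg (div_nonneg hD (sq_nonneg _))]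
  calc (∑ t, DBchi q (ρ t)) / T ^ 2 ≤ T * (√(d / γ) * √μ + (d - 1)) / T ^ 2 := by gcongr
    _ = √(d / γ) / T * √μ + (d - 1) / T := by field_simp
    _ ≤ √(d / (γ * T)) * √μ + (d - 1) / T := by
        gcongr
        rw [← div_div]
        exact Real.sqrt_div_le_sqrt_div_of_one_le (by positivity) hT1
end
end
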